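/- Let G be the graph on 11 vertices consisting of a 10-cycle w_1...w_{10} with an additional leaf w_{11} adjacent to w_{10}. Then the coloring of G □ C_4 assigning blue to v_{2,1}, green to v_{7,3}, and red to every other vertex is an exact 3-coloring with no rainbow 3-AP; consequently aw(G □ C_4, 3) = 4 even though diam(G □ C_4) is even. -/

import Mathlib

open SimpleGraph

/-- A rainbow 3-AP in `G` under coloring `c`: three vertices with
`d(v₁,v₂) = d(v₂,v₃)` receiving pairwise distinct colors. -/
def HasRainbow3AP {V C : Type*} (G : SimpleGraph V) (c : V → C) : Prop :=
  ∃ v₁ v₂ v₃ : V, G.dist v₁ v₂ = G.dist v₂ v₃ ∧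
    c v₁ ≠ c v₂ ∧ c v₂ ≠ c v₃ ∧ c v₁ ≠ c v₃

/-- The anti-van der Waerden number `aw(G,3)`: the least positive `r` such that
every surjective coloring with `r` colors yields a rainbow 3-AP. -/
noncomputable def aw {V : Type*} (G : SimpleGraph V) : ℕ :=
  sInf {r : ℕ | 0 < r ∧ ∀ c : V → Fin r, Function.Surjective c → HasRainbow3AP G c}

/-- The graph on 11 vertices consisting of a 10-cycle `w₁ … w₁₀` (here indices
`0 … 9`) with an additional leaf `w₁₁` (index `10`) adjacent to `w₁₀` (index `9`). -/
def leafCycle : SimpleGraph (Fin 11) :=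
  SimpleGraph.fromRel (fun i j =>
    (i.val + 1 = j.val ∧ j.val ≤ 9) ∨ (i.val = 9 ∧ j.val = 0) ∨
    (i.val = 9 ∧ j.val = 10))

/-- The coloring of `leafCycle □ C₄` assigning blue (= `0`) to `v_{2,1}`,
green (= `1`) to `v_{7,3}`, and red (= `2`) elsewhere. -/
def exCol : Fin 11 × Fin 4 → Fin 3 := fun v =>
  if v = ((1 : Fin 11), (0 : Fin 4)) then 0
  else if v = ((6 : Fin 11), (2 : Fin 4)) then 1
  else 2

/-!
Distances in `leafCycle □ C₄` are sums of distances in the factors, which are read off explicit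
tables. In `exCol` the blue and green vertices lie at odd distance `7` in a bipartite graph, and
each is the only vertex at distance `7` from the other; so no 3-AP contains both, while a rainbow
one would have to. The diameter is `6 + 2 = 8`.

Let `c` be an exact 4-colouring without rainbow 3-AP; a vertex equidistant from two vertices of
different colours then takes one of their colours. If two antipodal vertices `(w, i)`, `(w, i + 2)`
of a `C₄`-fibre get colours `a ≠ b`, the rows `i ± 1` are coloured from `{a, b}`, the two remaining
colours occur at antipodal pairs in the rows `i, i + 2`, and a vertex of row `i + 1` equidistant
from two of them gives a contradiction. Otherwise `c` is invariant under the antipodal map, so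
equidistance only matters up to antipodes. Then one side of the bipartition cannot carry three
colours (a finite check of distance patterns in `leafCycle`), nor two colours while the other side
carries a third: that vertex makes the colouring of the first side constant along a relation
`Linked` which connects `leafCycle`.
-/

local notation "𝐇" => boxProd leafCycle (cycleGraph 4)

namespace SimpleGraph

variable {V : Type*} {G : SimpleGraph V}

theorem exists_walk_length_eq_of_potential {u : V} {d : V → ℕ} (hzero : ∀ v, d v = 0 → v = u)
    (hdesc : ∀ v, d v ≠ 0 → ∃ w, G.Adj v w ∧ d w + 1 = d v) (v : V) :
    ∃ p : G.Walk v u, p.length = d v := by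
  induction hn : d v generalizing v with
  | zero => obtain rfl := hzero v hn; exact ⟨.nil, rfl⟩
  | succ n ih =>
    obtain ⟨w, hadj, hw⟩ := hdesc v (by omega)
    obtain ⟨p, hp⟩ := ih w (by omega)
    exact ⟨.cons hadj p, by rw [Walk.length_cons, hp]⟩

theorem le_length_of_potential {u : V} {d : V → ℕ} (hu : d u = 0)
    (hlip : ∀ v w, G.Adj v w → d v ≤ d w + 1) {v : V} (p : G.Walk v u) : d v ≤ p.length := by
  induction p with
  | nil => simp [hu]
  | cons hadj _ ih => rw [Walk.length_cons]; exact (hlip _ _ hadj).trans (by omega)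

theorem dist_eq_of_potential {u : V} {d : V → ℕ} (hzero : ∀ v, d v = 0 ↔ v = u)
    (hlip : ∀ v w, G.Adj v w → d v ≤ d w + 1)
    (hdesc : ∀ v, d v ≠ 0 → ∃ w, G.Adj v w ∧ d w + 1 = d v) (v : V) : G.dist u v = d v := by
  obtain ⟨p, hp⟩ := exists_walk_length_eq_of_potential (fun v => (hzero v).1) hdesc v
  obtain ⟨q, hq⟩ := p.reachable.exists_walk_length_eq_dist
  have hlb := le_length_of_potential ((hzero u).2 rfl) hlip q
  rw [dist_comm]
  exact le_antisymm (hp ▸ dist_le p) (hq ▸ hlb)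

theorem dist_boxProd {W : Type*} {H : SimpleGraph W} {x y : V × W} (h₁ : G.Reachable x.1 y.1)
    (h₂ : H.Reachable x.2 y.2) : (G □ H).dist x y = G.dist x.1 y.1 + H.dist x.2 y.2 := by
  rw [dist, edist_boxProd, ENat.toNat_add (edist_ne_top_iff_reachable.2 h₁)
    (edist_ne_top_iff_reachable.2 h₂), dist, dist]

theorem diam_eq_of_forall_dist_le [Finite V] [Nonempty V] (hG : G.Connected) {n : ℕ}
    (hle : ∀ u v, G.dist u v ≤ n) {u v : V} (huv : G.dist u v = n) : G.diam = n := by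
  obtain ⟨a, b, hab⟩ := G.exists_dist_eq_diam
  exact le_antisymm (hab ▸ hle a b)
    (huv ▸ dist_le_diam (connected_iff_ediam_ne_top.1 hG))

end SimpleGraph

theorem eq_of_rank_descent {α β : Type*} {R : α → α → Prop} {f : α → β} (rank : α → ℕ) {a : α}
    (hR : ∀ x y, R x y → f x = f y) (hzero : ∀ x, rank x = 0 → x = a)
    (hdesc : ∀ x, rank x ≠ 0 → ∃ y, R x y ∧ rank y < rank x) (x : α) : f x = f a := by
  induction hn : rank x using Nat.strong_induction_on generalizing x with
  | _ n ih =>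
    by_cases h : rank x = 0
    · rw [hzero x h]
    · obtain ⟨y, hxy, hy⟩ := hdesc x h
      exact (hR x y hxy).trans (ih _ (hn ▸ hy) y rfl)

section Rainbow

variable {V C : Type*} {G : SimpleGraph V} {c : V → C}

theorem eq_or_eq_of_not_hasRainbow3AP (hc : ¬ HasRainbow3AP G c) {x y z : V}
    (hd : G.dist z x = G.dist z y) (hxy : c x ≠ c y) : c z = c x ∨ c z = c y := by
  by_contra! h
  exact hc ⟨x, z, y, by rw [G.dist_comm, hd], h.1.symm, h.2, hxy⟩

theorem HasRainbow3AP.of_comp {D : Type*} {f : C → D} (h : HasRainbow3AP G (f ∘ c)) :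
    HasRainbow3AP G c := by
  obtain ⟨x, y, z, hd, h₁, h₂, h₃⟩ := h
  exact ⟨x, y, z, hd, fun h => h₁ (congrArg f h), fun h => h₂ (congrArg f h),
    fun h => h₃ (congrArg f h)⟩

-- A rainbow 3-AP would have to contain both `b` and `g`.
theorem not_hasRainbow3AP_of_eq_off_pair {b g : V} {k : C} (hk : ∀ v, v ≠ b → v ≠ g → c v = k)
    (hb : ∀ v, G.dist b v = G.dist b g → v = g) (hg : ∀ v, G.dist g v = G.dist g b → v = b)
    (hmid : ∀ v, G.dist b v ≠ G.dist v g) : ¬ HasRainbow3AP G c := by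
  rintro ⟨v₁, v₂, v₃, hd, h₁₂, h₂₃, h₁₃⟩
  have hcases : ∀ v, v = b ∨ v = g ∨ (v ≠ b ∧ v ≠ g ∧ c v = k) := fun v =>
    or_iff_not_imp_left.2 fun hvb => or_iff_not_imp_left.2 fun hvg => ⟨hvb, hvg, hk v hvb hvg⟩
  rcases hcases v₁ with rfl | rfl | ⟨n₁, m₁, e₁⟩ <;>
    rcases hcases v₂ with rfl | rfl | ⟨n₂, m₂, e₂⟩ <;>
    rcases hcases v₃ with rfl | rfl | ⟨n₃, m₃, e₃⟩
  all_goals grind [SimpleGraph.dist_comm]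

end Rainbow

theorem aw_eq_succ {V : Type*} {G : SimpleGraph V} {r : ℕ} {c₀ : V → Fin r}
    (hc₀ : Function.Surjective c₀) (hfree : ¬ HasRainbow3AP G c₀)
    (hrainbow : ∀ c : V → Fin (r + 1), Function.Surjective c → HasRainbow3AP G c) :
    aw G = r + 1 := by
  refine le_antisymm (Nat.sInf_le ⟨r.succ_pos, hrainbow⟩) (le_csInf ⟨_, r.succ_pos, hrainbow⟩ ?_)
  rintro s ⟨hs, hsr⟩
  by_contra! hlt
  have : Nonempty (Fin s) := ⟨⟨0, hs⟩⟩
  have hf := Function.invFun_surjective (Fin.castLE_injective (Nat.lt_succ_iff.1 hlt))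
  exact hfree (hsr _ (hf.comp hc₀)).of_comp

theorem Fin.four_val_add_two_mod_two (j : Fin 4) : (j + 2).val % 2 = j.val % 2 := by
  revert j; decide

theorem Fin.four_val_add_one_mod_two (j : Fin 4) : (j + 1).val % 2 ≠ j.val % 2 := by
  revert j; decide

theorem Fin.four_mod_two_eq_iff {j k : Fin 4} : k.val % 2 = j.val % 2 ↔ k = j ∨ k = j + 2 := by
  revert j k; decide

theorem Fin.four_add_two_add_two (j : Fin 4) : j + 2 + 2 = j := by
  revert j; decide

theorem Fin.four_exists_three_ne (e : Fin 4) :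
    ∃ k₁ k₂ k₃ : Fin 4, k₁ ≠ k₂ ∧ k₁ ≠ k₃ ∧ k₂ ≠ k₃ ∧ k₁ ≠ e ∧ k₂ ≠ e ∧ k₃ ≠ e := by
  revert e; decide

theorem Fin.four_exists_two_ne {a b : Fin 4} (hab : a ≠ b) :
    ∃ k₁ k₂ : Fin 4, k₁ ≠ k₂ ∧ k₁ ≠ a ∧ k₁ ≠ b ∧ k₂ ≠ a ∧ k₂ ≠ b := by
  revert a b; decide

theorem cycleGraph_four_dist (j k : Fin 4) :
    (cycleGraph 4).dist j k = if k = j then 0 else if k = j + 2 then 2 else 1 := by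
  refine dist_eq_of_potential (d := fun k => if k = j then 0 else if k = j + 2 then 2 else 1)
    ?_ ?_ ?_ k <;> revert j <;> decide

theorem cycleGraph_four_dist_eq_one_iff {l j : Fin 4} :
    (cycleGraph 4).dist l j = 1 ↔ l.val % 2 ≠ j.val % 2 := by
  rw [cycleGraph_four_dist]; revert l j; decide

theorem cycleGraph_four_dist_add_two (j : Fin 4) : (cycleGraph 4).dist j (j + 2) = 2 := by
  rw [cycleGraph_four_dist]; revert j; decide

theorem cycleGraph_four_exists_dist_eq_add_one (l a b : Fin 4) (hab : a.val % 2 ≠ b.val % 2) :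
    ∃ j k : Fin 4, j.val % 2 = a.val % 2 ∧ k.val % 2 = b.val % 2 ∧
      (cycleGraph 4).dist l k = (cycleGraph 4).dist l j + 1 := by
  simp only [cycleGraph_four_dist]; revert l a b; decide

def leafCycleDist : Fin 11 → Fin 11 → ℕ :=
  ![![0, 1, 2, 3, 4, 5, 4, 3, 2, 1, 2],
    ![1, 0, 1, 2, 3, 4, 5, 4, 3, 2, 3],
    ![2, 1, 0, 1, 2, 3, 4, 5, 4, 3, 4],
    ![3, 2, 1, 0, 1, 2, 3, 4, 5, 4, 5],
    ![4, 3, 2, 1, 0, 1, 2, 3, 4, 5, 6],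
    ![5, 4, 3, 2, 1, 0, 1, 2, 3, 4, 5],
    ![4, 5, 4, 3, 2, 1, 0, 1, 2, 3, 4],
    ![3, 4, 5, 4, 3, 2, 1, 0, 1, 2, 3],
    ![2, 3, 4, 5, 4, 3, 2, 1, 0, 1, 2],
    ![1, 2, 3, 4, 5, 4, 3, 2, 1, 0, 1],
    ![2, 3, 4, 5, 6, 5, 4, 3, 2, 1, 0]]

instance : DecidableRel leafCycle.Adj := fun a b =>
  decidable_of_iff _ (fromRel_adj _ a b).symm

theorem leafCycle_dist (u v : Fin 11) : leafCycle.dist u v = leafCycleDist u v := by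
  refine dist_eq_of_potential ?_ ?_ ?_ v <;> revert u <;> decide

theorem leafCycle_connected : leafCycle.Connected := by
  refine ⟨fun u v => ?_⟩
  by_cases h : u = v
  · exact h ▸ .rfl
  · refine .of_dist_ne_zero ?_
    rw [leafCycle_dist]
    revert u v
    decide

theorem leafCycle_exists_dist_eq {x y : Fin 11} (h : x.val % 2 = y.val % 2) :
    ∃ z, leafCycle.dist z x = leafCycle.dist z y := by
  simp only [leafCycle_dist]; revert x y; decide

theorem leafCycle_exists_even_gaps {u v w : Fin 11} (huv : u ≠ v) (huw : u ≠ w) (hvw : v ≠ w)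
    (hv : u.val % 2 = v.val % 2) (hw : u.val % 2 = w.val % 2) :
    ∃ z, (leafCycle.dist z u = leafCycle.dist z v ∨
          Nat.dist (leafCycle.dist z u) (leafCycle.dist z v) = 2) ∧
      (leafCycle.dist z u = leafCycle.dist z w ∨
          Nat.dist (leafCycle.dist z u) (leafCycle.dist z w) = 2) ∧
      (leafCycle.dist z v = leafCycle.dist z w ∨
          Nat.dist (leafCycle.dist z v) (leafCycle.dist z w) = 2) := by
  simp only [leafCycle_dist]; revert u v w; decide

theorem leafCycle_odd_gap_cases {u v w : Fin 11} (huv : u ≠ v) (hv : u.val % 2 = v.val % 2)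
    (hw : u.val % 2 ≠ w.val % 2) :
    leafCycle.dist w u = leafCycle.dist w v ∨
      Nat.dist (leafCycle.dist v u) (leafCycle.dist v w) = 1 ∨
      Nat.dist (leafCycle.dist u v) (leafCycle.dist u w) = 1 ∨
      ∃ z, Nat.dist (leafCycle.dist z u) (leafCycle.dist z w) = 1 ∧
        Nat.dist (leafCycle.dist z v) (leafCycle.dist z w) = 1 := by
  simp only [leafCycle_dist]; revert u v w; decide

-- The pairs `x, y` such that a vertex over `z` is equidistant, up to antipodes, from the vertices
-- over `x` and `y` on the other side of `𝐇` (see `EquidistantUpToAntipode.of_linked`).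
def Linked (z x y : Fin 11) : Prop :=
  if x.val % 2 = y.val % 2 then
    leafCycle.dist z x = leafCycle.dist z y ∨
      (z.val % 2 ≠ x.val % 2 ∧ Nat.dist (leafCycle.dist z x) (leafCycle.dist z y) = 2)
  else Nat.dist (leafCycle.dist z x) (leafCycle.dist z y) = 1

-- For each `z`, a rank certifying that `Linked z` connects every vertex to `0`.
def linkedRank : Fin 11 → Fin 11 → ℕ :=
  ![![0, 1, 2, 2, 3, 3, 3, 2, 2, 1, 2],
    ![0, 1, 1, 1, 1, 2, 2, 2, 1, 1, 1],
    ![0, 1, 2, 1, 1, 1, 2, 2, 2, 1, 2],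
    ![0, 1, 1, 2, 1, 1, 1, 1, 1, 1, 1],
    ![0, 1, 2, 2, 3, 2, 2, 1, 1, 1, 2],
    ![0, 1, 1, 2, 2, 3, 2, 2, 1, 1, 1],
    ![0, 1, 1, 1, 2, 2, 3, 2, 2, 1, 1],
    ![0, 1, 1, 1, 1, 1, 1, 2, 1, 1, 1],
    ![0, 1, 2, 2, 2, 1, 1, 1, 2, 1, 1],
    ![0, 1, 1, 2, 2, 2, 1, 1, 1, 1, 1],
    ![0, 1, 2, 2, 3, 2, 2, 1, 1, 1, 2]]

theorem linkedRank_eq_zero {z x : Fin 11} (h : linkedRank z x = 0) : x = 0 := by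
  revert z x; decide

theorem exists_linked_linkedRank_lt {z x : Fin 11} (h : linkedRank z x ≠ 0) :
    ∃ y, Linked z x y ∧ linkedRank z y < linkedRank z x := by
  simp only [Linked, leafCycle_dist]; revert z x; decide

theorem leafCycle_box_connected : 𝐇.Connected :=
  leafCycle_connected.boxProd cycleGraph_connected

theorem leafCycle_box_dist (p q : Fin 11 × Fin 4) :
    𝐇.dist p q = leafCycle.dist p.1 q.1 + (cycleGraph 4).dist p.2 q.2 :=
  dist_boxProd (leafCycle_connected _ _) (cycleGraph_connected.preconnected _ _)

theorem leafCycle_box_diam : 𝐇.diam = 8 := by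
  have h₁ : ∀ u v, leafCycle.dist u v ≤ 6 := by simp only [leafCycle_dist]; decide
  have h₂ : ∀ j k, (cycleGraph 4).dist j k ≤ 2 := by simp only [cycleGraph_four_dist]; decide
  refine diam_eq_of_forall_dist_le leafCycle_box_connected (u := (10, 0)) (v := (4, 2))
    (fun p q => ?_) ?_
  · rw [leafCycle_box_dist]
    exact Nat.add_le_add (h₁ _ _) (h₂ _ _)
  · simp only [leafCycle_box_dist, leafCycle_dist, cycleGraph_four_dist]
    decide

theorem exCol_surjective : Function.Surjective exCol := by decide

theorem not_hasRainbow3AP_exCol : ¬ HasRainbow3AP 𝐇 exCol := by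
  refine not_hasRainbow3AP_of_eq_off_pair (b := (1, 0)) (g := (6, 2)) (k := 2)
    (fun v hb hg => by simp [exCol, hb, hg]) ?_ ?_ ?_ <;>
  simp only [leafCycle_box_dist, leafCycle_dist, cycleGraph_four_dist] <;> decide

-- `𝐇` is bipartite, with sides `side p = 0` and `side p = 1`.
def side (p : Fin 11 × Fin 4) : ℕ := (p.1.val + p.2.val) % 2

-- Rows `j` with `j % 2 = p.2 % 2` are `p.2` and its antipode `p.2 + 2`.
def EquidistantUpToAntipode (z p q : Fin 11 × Fin 4) : Prop :=
  ∃ j k : Fin 4, j.val % 2 = p.2.val % 2 ∧ k.val % 2 = q.2.val % 2 ∧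
    𝐇.dist z (p.1, j) = 𝐇.dist z (q.1, k)

namespace EquidistantUpToAntipode

variable {z p q : Fin 11 × Fin 4}

theorem symm (h : EquidistantUpToAntipode z p q) : EquidistantUpToAntipode z q p :=
  let ⟨j, k, hj, hk, hd⟩ := h
  ⟨k, j, hk, hj, hd.symm⟩

theorem of_dist_eq (hpq : p.2.val % 2 = q.2.val % 2)
    (h : leafCycle.dist z.1 p.1 = leafCycle.dist z.1 q.1) : EquidistantUpToAntipode z p q :=
  ⟨p.2, p.2, rfl, hpq, by rw [leafCycle_box_dist, leafCycle_box_dist, h]⟩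

theorem of_dist_eq_add_two (hp : p.2.val % 2 = z.2.val % 2) (hq : q.2.val % 2 = z.2.val % 2)
    (h : leafCycle.dist z.1 p.1 = leafCycle.dist z.1 q.1 + 2) : EquidistantUpToAntipode z p q :=
  ⟨z.2, z.2 + 2, hp.symm, (Fin.four_val_add_two_mod_two z.2).trans hq.symm, by
    rw [leafCycle_box_dist, leafCycle_box_dist, dist_self, cycleGraph_four_dist_add_two, h]⟩

theorem of_even_gap (hp : p.2.val % 2 = z.2.val % 2) (hq : q.2.val % 2 = z.2.val % 2)
    (h : leafCycle.dist z.1 p.1 = leafCycle.dist z.1 q.1 ∨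
      Nat.dist (leafCycle.dist z.1 p.1) (leafCycle.dist z.1 q.1) = 2) :
    EquidistantUpToAntipode z p q := by
  unfold Nat.dist at h
  rcases (by omega : leafCycle.dist z.1 p.1 = leafCycle.dist z.1 q.1 ∨
    leafCycle.dist z.1 p.1 = leafCycle.dist z.1 q.1 + 2 ∨
    leafCycle.dist z.1 q.1 = leafCycle.dist z.1 p.1 + 2) with h | h | h
  · exact of_dist_eq (hp.trans hq.symm) h
  · exact of_dist_eq_add_two hp hq h
  · exact (of_dist_eq_add_two hq hp h).symm

theorem of_dist_eq_add_one (hpq : p.2.val % 2 ≠ q.2.val % 2)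
    (h : leafCycle.dist z.1 p.1 = leafCycle.dist z.1 q.1 + 1) : EquidistantUpToAntipode z p q := by
  obtain ⟨j, k, hj, hk, hd⟩ := cycleGraph_four_exists_dist_eq_add_one z.2 p.2 q.2 hpq
  exact ⟨j, k, hj, hk, by simp only [leafCycle_box_dist]; omega⟩

theorem of_odd_gap (hpq : p.2.val % 2 ≠ q.2.val % 2)
    (h : Nat.dist (leafCycle.dist z.1 p.1) (leafCycle.dist z.1 q.1) = 1) :
    EquidistantUpToAntipode z p q := by
  unfold Nat.dist at h
  rcases (by omega : leafCycle.dist z.1 p.1 = leafCycle.dist z.1 q.1 + 1 ∨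
    leafCycle.dist z.1 q.1 = leafCycle.dist z.1 p.1 + 1) with h | h
  · exact of_dist_eq_add_one hpq h
  · exact (of_dist_eq_add_one (Ne.symm hpq) h).symm

end EquidistantUpToAntipode

theorem EquidistantUpToAntipode.of_linked {z p q : Fin 11 × Fin 4} (hpq : side p = side q)
    (hz : side z ≠ side p) (h : Linked z.1 p.1 q.1) : EquidistantUpToAntipode z p q := by
  unfold side at hpq hz
  unfold Linked at h
  split_ifs at h with hpar
  · rcases h with h | ⟨hzp, h⟩
    · exact .of_dist_eq (by omega) h
    · exact .of_even_gap (by omega) (by omega) (.inr h)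
  · exact .of_odd_gap (by omega) h

section FourColorings

variable {c : Fin 11 × Fin 4 → Fin 4}

theorem color_mem_of_antipodal_ne (hc : ¬ HasRainbow3AP 𝐇 c) {x : Fin 11} {j : Fin 4}
    (hne : c (x, j) ≠ c (x, j + 2)) {l : Fin 4} (hl : l.val % 2 ≠ j.val % 2) (u : Fin 11) :
    c (u, l) = c (x, j) ∨ c (u, l) = c (x, j + 2) := by
  refine eq_or_eq_of_not_hasRainbow3AP hc ?_ hne
  rw [leafCycle_box_dist, leafCycle_box_dist, cycleGraph_four_dist_eq_one_iff.2 hl,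
    cycleGraph_four_dist_eq_one_iff.2 (by rwa [Fin.four_val_add_two_mod_two])]

theorem exists_color_mem_of_parity_eq (hc : ¬ HasRainbow3AP 𝐇 c) {x y : Fin 11} {j k l : Fin 4}
    (hxy : x.val % 2 = y.val % 2) (hj : l.val % 2 ≠ j.val % 2) (hk : l.val % 2 ≠ k.val % 2)
    (hne : c (x, j) ≠ c (y, k)) : ∃ z, c (z, l) = c (x, j) ∨ c (z, l) = c (y, k) := by
  obtain ⟨z, hz⟩ := leafCycle_exists_dist_eq hxy
  refine ⟨z, eq_or_eq_of_not_hasRainbow3AP hc ?_ hne⟩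
  rw [leafCycle_box_dist, leafCycle_box_dist, cycleGraph_four_dist_eq_one_iff.2 hj,
    cycleGraph_four_dist_eq_one_iff.2 hk, hz]

/-- Three colours other than `e` must sit in the rows of the other parity; two of them lie over
vertices of `leafCycle` of equal parity, and a vertex of a row of colour `e` is equidistant from
both. -/
theorem false_of_rows_monochromatic (hc : ¬ HasRainbow3AP 𝐇 c) (hsurj : Function.Surjective c)
    {i e : Fin 4} (hmono : ∀ u l, l.val % 2 ≠ i.val % 2 → c (u, l) = e) : False := by
  obtain ⟨k₁, k₂, k₃, h₁₂, h₁₃, h₂₃, h₁, h₂, h₃⟩ := Fin.four_exists_three_ne e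
  have hrep : ∀ k, k ≠ e → ∃ v j, c (v, j) = k ∧ (i + 1).val % 2 ≠ j.val % 2 := by
    intro k hk
    obtain ⟨⟨v, j⟩, hv⟩ := hsurj k
    refine ⟨v, j, hv, fun hj => hk (hv ▸ hmono v j ?_)⟩
    have := Fin.four_val_add_one_mod_two i
    omega
  obtain ⟨v₁, j₁, hv₁, hj₁⟩ := hrep k₁ h₁
  obtain ⟨v₂, j₂, hv₂, hj₂⟩ := hrep k₂ h₂
  obtain ⟨v₃, j₃, hv₃, hj₃⟩ := hrep k₃ h₃
  have hrow := fun u => hmono u (i + 1) (Fin.four_val_add_one_mod_two i)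
  have hpair : ∀ {v v' j j'}, v.val % 2 = v'.val % 2 → (i + 1).val % 2 ≠ j.val % 2 →
      (i + 1).val % 2 ≠ j'.val % 2 → c (v, j) ≠ c (v', j') → c (v, j) ≠ e → c (v', j') ≠ e →
      False := by
    intro v v' j j' hp hj hj' hne he he'
    obtain ⟨z, hz | hz⟩ := exists_color_mem_of_parity_eq hc hp hj hj' hne
    · exact he (hz ▸ hrow z)
    · exact he' (hz ▸ hrow z)
  subst hv₁ hv₂ hv₃
  rcases (by omega : v₁.val % 2 = v₂.val % 2 ∨ v₁.val % 2 = v₃.val % 2 ∨ v₂.val % 2 = v₃.val % 2)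
    with h | h | h
  · exact hpair h hj₁ hj₂ h₁₂ h₁ h₂
  · exact hpair h hj₁ hj₃ h₁₃ h₁ h₃
  · exact hpair h hj₂ hj₃ h₂₃ h₂ h₃

theorem antipodal_color_eq (hc : ¬ HasRainbow3AP 𝐇 c) (hsurj : Function.Surjective c)
    {w : Fin 11} {i : Fin 4} (hw : c (w, i) ≠ c (w, i + 2)) {u : Fin 11} {j : Fin 4}
    (ha : c (u, j) ≠ c (w, i)) (hb : c (u, j) ≠ c (w, i + 2)) :
    j.val % 2 = i.val % 2 ∧ c (u, j + 2) = c (u, j) := by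
  have hj : j.val % 2 = i.val % 2 := by
    by_contra hj
    rcases color_mem_of_antipodal_ne hc hw hj u with h | h
    exacts [ha h, hb h]
  refine ⟨hj, ?_⟩
  by_contra hu
  refine false_of_rows_monochromatic hc hsurj (i := i) (e := c (u, j + 2)) fun z l hl => ?_
  rcases color_mem_of_antipodal_ne hc (Ne.symm hu) (hj ▸ hl) z with h | h
  · rcases color_mem_of_antipodal_ne hc hw hl z with h' | h'
    exacts [(ha (h ▸ h')).elim, (hb (h ▸ h')).elim]
  · exact h

theorem exists_color_eq_of_antipodal_ne (hc : ¬ HasRainbow3AP 𝐇 c)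
    (hsurj : Function.Surjective c) {w : Fin 11} {i : Fin 4} (hw : c (w, i) ≠ c (w, i + 2))
    {k : Fin 4} (ha : k ≠ c (w, i)) (hb : k ≠ c (w, i + 2)) : ∃ u, c (u, i) = k := by
  obtain ⟨⟨u, j⟩, hu⟩ := hsurj k
  subst hu
  obtain ⟨hj, hanti⟩ := antipodal_color_eq hc hsurj hw ha hb
  rcases Fin.four_mod_two_eq_iff.1 hj with rfl | rfl
  · exact ⟨u, rfl⟩
  · exact ⟨u, by rwa [Fin.four_add_two_add_two] at hanti⟩

theorem parity_ne_of_antipodal_ne (hc : ¬ HasRainbow3AP 𝐇 c) {w : Fin 11} {i : Fin 4}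
    (hw : c (w, i) ≠ c (w, i + 2)) {u : Fin 11} (ha : c (u, i) ≠ c (w, i))
    (hb : c (u, i) ≠ c (w, i + 2)) : u.val % 2 ≠ w.val % 2 := by
  intro huw
  obtain ⟨z, hz⟩ := leafCycle_exists_dist_eq huw
  have hside := Fin.four_val_add_one_mod_two i
  have hdist : ∀ j : Fin 4, j.val % 2 = i.val % 2 →
      𝐇.dist (z, i + 1) (u, i) = 𝐇.dist (z, i + 1) (w, j) := by
    intro j hj
    rw [leafCycle_box_dist, leafCycle_box_dist, cycleGraph_four_dist_eq_one_iff.2 hside,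
      cycleGraph_four_dist_eq_one_iff.2 (hj ▸ hside), hz]
  have h₁ := eq_or_eq_of_not_hasRainbow3AP hc (hdist i rfl) ha
  have h₂ := eq_or_eq_of_not_hasRainbow3AP hc (hdist (i + 2) (Fin.four_val_add_two_mod_two i)) hb
  rcases color_mem_of_antipodal_ne hc hw hside z with h | h <;> simp only [h] at h₁ h₂ <;>
    grind

theorem false_of_antipodal_ne (hc : ¬ HasRainbow3AP 𝐇 c) (hsurj : Function.Surjective c)
    {w : Fin 11} {i : Fin 4} (hw : c (w, i) ≠ c (w, i + 2)) : False := by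
  obtain ⟨γ, δ, hγδ, hγa, hγb, hδa, hδb⟩ := Fin.four_exists_two_ne hw
  obtain ⟨u, rfl⟩ := exists_color_eq_of_antipodal_ne hc hsurj hw hγa hγb
  obtain ⟨v, rfl⟩ := exists_color_eq_of_antipodal_ne hc hsurj hw hδa hδb
  have hu := parity_ne_of_antipodal_ne hc hw hγa hγb
  have hv := parity_ne_of_antipodal_ne hc hw hδa hδb
  have hside := Fin.four_val_add_one_mod_two i
  obtain ⟨z, hz⟩ := exists_color_mem_of_parity_eq hc (by omega) hside hside hγδ
  rcases color_mem_of_antipodal_ne hc hw hside z with h | h <;> rw [h] at hz <;> grind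

theorem color_eq_of_mod_two_eq (hflip : ∀ x j, c (x, j + 2) = c (x, j)) {x : Fin 11}
    {j k : Fin 4} (h : k.val % 2 = j.val % 2) : c (x, k) = c (x, j) := by
  rcases Fin.four_mod_two_eq_iff.1 h with rfl | rfl
  exacts [rfl, hflip x j]

theorem color_mem_of_equidistantUpToAntipode (hc : ¬ HasRainbow3AP 𝐇 c)
    (hflip : ∀ x j, c (x, j + 2) = c (x, j)) {z p q : Fin 11 × Fin 4}
    (h : EquidistantUpToAntipode z p q) (hne : c p ≠ c q) : c z = c p ∨ c z = c q := by
  obtain ⟨j, k, hj, hk, hd⟩ := h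
  rw [← color_eq_of_mod_two_eq hflip hj, ← color_eq_of_mod_two_eq hflip hk] at hne ⊢
  exact eq_or_eq_of_not_hasRainbow3AP hc hd hne

theorem fst_ne_of_side_eq (hflip : ∀ x j, c (x, j + 2) = c (x, j)) {p q : Fin 11 × Fin 4}
    (hpq : side p = side q) (hne : c p ≠ c q) : p.1 ≠ q.1 := by
  obtain ⟨x, j⟩ := p
  obtain ⟨y, k⟩ := q
  rintro (rfl : x = y)
  exact hne (color_eq_of_mod_two_eq hflip (by simp only [side] at hpq; omega)).symm

theorem false_of_three_colors_of_parity_eq (hc : ¬ HasRainbow3AP 𝐇 c)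
    (hflip : ∀ x j, c (x, j + 2) = c (x, j)) {p q r : Fin 11 × Fin 4} (hpq : side p = side q)
    (hpr : side p = side r) (hpar : p.1.val % 2 = q.1.val % 2) (hcpq : c p ≠ c q)
    (hcpr : c p ≠ c r) (hcqr : c q ≠ c r) : False := by
  have mem : ∀ z {s t : Fin 11 × Fin 4}, c s ≠ c t → EquidistantUpToAntipode z s t →
      c z = c s ∨ c z = c t := fun _ _ _ hne h =>
    color_mem_of_equidistantUpToAntipode hc hflip h hne
  have hpq₁ := fst_ne_of_side_eq hflip hpq hcpq
  have hpr₁ := fst_ne_of_side_eq hflip hpr hcpr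
  have hqr₁ := fst_ne_of_side_eq hflip (hpq.symm.trans hpr) hcqr
  unfold side at hpq hpr
  have hpq₂ : p.2.val % 2 = q.2.val % 2 := by omega
  by_cases hr : p.1.val % 2 = r.1.val % 2
  · have hpr₂ : p.2.val % 2 = r.2.val % 2 := by omega
    obtain ⟨z, h₁, h₂, h₃⟩ := leafCycle_exists_even_gaps hpq₁ hpr₁ hqr₁ hpar hr
    have e₁ := mem (z, p.2) hcpq (.of_even_gap rfl hpq₂.symm h₁)
    have e₂ := mem (z, p.2) hcpr (.of_even_gap rfl hpr₂.symm h₂)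
    have e₃ := mem (z, p.2) hcqr (.of_even_gap hpq₂.symm hpr₂.symm h₃)
    grind
  · have hpr₂ : p.2.val % 2 ≠ r.2.val % 2 := by omega
    have hqr₂ : q.2.val % 2 ≠ r.2.val % 2 := by omega
    rcases leafCycle_odd_gap_cases hpq₁ hpar hr with h | h | h | ⟨z, h₁, h₂⟩
    · have := mem r hcpq (.of_dist_eq hpq₂ h)
      grind
    · have := mem q hcpr (.of_odd_gap hpr₂ h)
      grind
    · have := mem p hcqr (.of_odd_gap hqr₂ h)
      grind
    · have e₁ := mem (z, p.2) hcpr (.of_odd_gap hpr₂ h₁)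
      have e₂ := mem (z, p.2) hcqr (.of_odd_gap hqr₂ h₂)
      have e₃ := mem (z, p.2) hcpq (.of_even_gap rfl hpq₂.symm (by
        dsimp only; unfold Nat.dist at h₁ h₂ ⊢; omega))
      grind

theorem false_of_three_colors_same_side (hc : ¬ HasRainbow3AP 𝐇 c)
    (hflip : ∀ x j, c (x, j + 2) = c (x, j)) {p q r : Fin 11 × Fin 4} (hpq : side p = side q)
    (hpr : side p = side r) (hcpq : c p ≠ c q) (hcpr : c p ≠ c r) (hcqr : c q ≠ c r) : False := by
  rcases (by omega : p.1.val % 2 = q.1.val % 2 ∨ p.1.val % 2 = r.1.val % 2 ∨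
      q.1.val % 2 = r.1.val % 2) with h | h | h
  · exact false_of_three_colors_of_parity_eq hc hflip hpq hpr h hcpq hcpr hcqr
  · exact false_of_three_colors_of_parity_eq hc hflip hpr hpq h hcpr hcpq hcqr.symm
  · exact false_of_three_colors_of_parity_eq hc hflip (hpq.symm.trans hpr) hpq.symm h hcqr hcpq.symm
      hcpr.symm

theorem exists_third_color_of_side_ne (hc : ¬ HasRainbow3AP 𝐇 c)
    (hflip : ∀ x j, c (x, j + 2) = c (x, j)) {p q r : Fin 11 × Fin 4} (hpq : side p = side q)
    (hr : side r ≠ side p) (hcpq : c p ≠ c q) (hrp : c r ≠ c p) (hrq : c r ≠ c q) :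
    ∃ s, side s = side p ∧ c s ≠ c p ∧ c s ≠ c q := by
  by_contra! hs
  let row : Fin 11 → Fin 4 := fun x => ⟨(side p + x.val) % 2, by omega⟩
  have hrow : ∀ x, side (x, row x) = side p := fun x => by simp only [side, row]; omega
  have hlink : ∀ x y, Linked r.1 x y → c (x, row x) = c (y, row y) := by
    intro x y hxy
    by_contra hne
    have hmem := color_mem_of_equidistantUpToAntipode hc hflip
      (.of_linked ((hrow x).trans (hrow y).symm) (hrow x ▸ hr) hxy) hne
    have hx := hs _ (hrow x)
    have hy := hs _ (hrow y)
    grind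
  have hconst := eq_of_rank_descent (linkedRank r.1) hlink (fun _ => linkedRank_eq_zero)
    (fun _ => exists_linked_linkedRank_lt)
  have hrow_eq : ∀ s : Fin 11 × Fin 4, side s = side p → c s = c (s.1, row s.1) := by
    intro s hsp
    exact color_eq_of_mod_two_eq hflip (by simp only [side, row] at hsp ⊢; omega)
  exact hcpq ((hrow_eq p rfl).trans ((hconst p.1).trans ((hconst q.1).symm.trans
    (hrow_eq q hpq.symm).symm)))

theorem false_of_two_colors_same_side (hc : ¬ HasRainbow3AP 𝐇 c)
    (hflip : ∀ x j, c (x, j + 2) = c (x, j)) {p q r : Fin 11 × Fin 4} (hpq : side p = side q)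
    (hcpq : c p ≠ c q) (hrp : c r ≠ c p) (hrq : c r ≠ c q) : False := by
  by_cases hr : side r = side p
  · exact false_of_three_colors_same_side hc hflip hpq hr.symm hcpq hrp.symm hrq.symm
  · obtain ⟨s, hs, hsp, hsq⟩ := exists_third_color_of_side_ne hc hflip hpq hr hcpq hrp hrq
    exact false_of_three_colors_same_side hc hflip hpq hs.symm hcpq hsp.symm hsq.symm

theorem false_of_antipodal_eq (hc : ¬ HasRainbow3AP 𝐇 c) (hsurj : Function.Surjective c)
    (hflip : ∀ x j, c (x, j + 2) = c (x, j)) : False := by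
  obtain ⟨p₀, h₀⟩ := hsurj 0
  obtain ⟨p₁, h₁⟩ := hsurj 1
  obtain ⟨p₂, h₂⟩ := hsurj 2
  rcases (by unfold side; omega : side p₀ = side p₁ ∨ side p₀ = side p₂ ∨ side p₁ = side p₂)
    with h | h | h
  · exact false_of_two_colors_same_side hc hflip (r := p₂) h (by simp [h₀, h₁])
      (by simp [h₀, h₂]) (by simp [h₁, h₂])
  · exact false_of_two_colors_same_side hc hflip (r := p₁) h (by simp [h₀, h₂])
      (by simp [h₀, h₁]) (by simp [h₁, h₂])
  · exact false_of_two_colors_same_side hc hflip (r := p₀) h (by simp [h₁, h₂])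
      (by simp [h₀, h₁]) (by simp [h₀, h₂])

theorem hasRainbow3AP_of_surjective (hsurj : Function.Surjective c) : HasRainbow3AP 𝐇 c := by
  by_contra hc
  by_cases hflip : ∀ x j, c (x, j + 2) = c (x, j)
  · exact false_of_antipodal_eq hc hsurj hflip
  · simp only [not_forall] at hflip
    obtain ⟨x, j, h⟩ := hflip
    exact false_of_antipodal_ne hc hsurj (Ne.symm h)

end FourColorings

theorem stmt_19 :
    Function.Surjective exCol ∧
    ¬ HasRainbow3AP (leafCycle □ cycleGraph 4) exCol ∧
    aw (leafCycle □ cycleGraph 4) = 4 ∧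
    Even ((leafCycle □ cycleGraph 4).diam) :=
  ⟨exCol_surjective, not_hasRainbow3AP_exCol,
    aw_eq_succ exCol_surjective not_hasRainbow3AP_exCol fun _ => hasRainbow3AP_of_surjective,
    leafCycle_box_diam ▸ ⟨4, rfl⟩⟩
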